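/- arXiv:2109.13501 — 8 statements merged into one kernel-verified Lean document; each statement's English description precedes it below -/
import Mathlib

section
/- Let q ≠ 0 be complex, A₁ the matrix with rows (1,0,0),(0,0,1),(0,1,0), A₂ the matrix with rows (0,1,0),(1,0,0),(0,0,1), S₁ = ρ(σ₁) with rows (q²,0,0),(q(q-1),1-q,q),(0,1,0), and S₂ = ρ(σ₂) with rows (1-q,q,q(q-1)),(1,0,0),(0,0,q²). Then S₁·A₂·A₁ = A₂·A₁·S₂. -/
open Matrix

theorem lk_mixed_rel_1 (q : ℂ) (hq : q ≠ 0) :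
    let A₁ : Matrix (Fin 3) (Fin 3) ℂ := !![1, 0, 0; 0, 0, 1; 0, 1, 0]
    let A₂ : Matrix (Fin 3) (Fin 3) ℂ := !![0, 1, 0; 1, 0, 0; 0, 0, 1]
    let S₁ : Matrix (Fin 3) (Fin 3) ℂ := !![q^2, 0, 0; q*(q-1), 1-q, q; 0, 1, 0]
    let S₂ : Matrix (Fin 3) (Fin 3) ℂ := !![1-q, q, q*(q-1); 1, 0, 0; 0, 0, q^2]
    S₁ * A₂ * A₁ = A₂ * A₁ * S₂ := by
  intro A₁ A₂ S₁ S₂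
  simp only [A₁, A₂, S₁, S₂]
  ext i j
  fin_cases i <;> fin_cases j <;> simp [Matrix.mul_apply, Fin.sum_univ_succ] <;> ring
end

section
/- Let q = 2 and let T be the matrix with rows (2, 2, -1), (0,0,1), (0,4,0), and A₂ the matrix with rows (0,1,0),(1,0,0),(0,0,1). Then (A₂·T)⁴·T⁻⁴ = I₃, while (A₂·T)⁴ ≠ I₃. -/
open Matrix

theorem lk_unfaithful_q2 :
    let T : Matrix (Fin 3) (Fin 3) ℂ := !![2, 2, -1; 0, 0, 1; 0, 4, 0]
    let A₂ : Matrix (Fin 3) (Fin 3) ℂ := !![0, 1, 0; 1, 0, 0; 0, 0, 1]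
    (A₂ * T) ^ 4 * T ^ (-4 : ℤ) = 1 ∧ (A₂ * T) ^ 4 ≠ 1 := by
  intro T A₂
  have hT4 : T ^ 4 = !![16, 0, 0; 0, 16, 0; 0, 0, (16:ℂ)] := by
    norm_num [pow_succ, T, Matrix.mul_fin_three]
  have hM4 : (A₂ * T) ^ 4 = !![16, 0, 0; 0, 16, 0; 0, 0, (16:ℂ)] := by
    norm_num [pow_succ, T, A₂, Matrix.mul_fin_three]
  have hinv : (T ^ 4)⁻¹ = !![(16:ℂ)⁻¹, 0, 0; 0, 16⁻¹, 0; 0, 0, 16⁻¹] := by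
    apply Matrix.inv_eq_right_inv
    rw [hT4]
    norm_num [Matrix.mul_fin_three]
    exact Matrix.one_fin_three.symm
  constructor
  · rw [show ((-4 : ℤ)) = -(4:ℕ) by norm_num, Matrix.zpow_neg_natCast, hM4, hinv]
    norm_num [Matrix.mul_fin_three]
    exact Matrix.one_fin_three.symm
  · rw [hM4]
    intro h
    have := congrFun (congrFun h 0) 0
    simp [Matrix.one_fin_three] at this
end

section
/- Let q = 1/2 and let T be the matrix with rows (1/2, -1/4, 1/2), (0,0,1), (0,1/4,0), and M = A₁·A₂·A₁ the matrix with rows (0,0,1),(0,1,0),(1,0,0). Then (M·T)⁴·T⁻⁴ = I₃, while T⁻⁴ ≠ I₃. -/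
open Matrix

theorem lk_unfaithful_qhalf :
    let T : Matrix (Fin 3) (Fin 3) ℂ := !![1/2, -1/4, 1/2; 0, 0, 1; 0, 1/4, 0]
    let M : Matrix (Fin 3) (Fin 3) ℂ := !![0, 0, 1; 0, 1, 0; 1, 0, 0]
    (M * T) ^ 4 * T ^ (-4 : ℤ) = 1 ∧ T ^ (-4 : ℤ) ≠ 1 := by
  intro T M
  have h4 : T ^ 4 = !![1/16, 0, 0; 0, 1/16, 0; 0, 0, 1/16] := by
    rw [pow_succ, pow_succ, pow_succ, pow_one]
    simp [T, Matrix.mul_fin_three]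
    norm_num
  have hneg : T ^ (-4 : ℤ) = (T ^ 4)⁻¹ := zpow_negSucc T 3
  have hinv : (T ^ 4)⁻¹ = !![16, 0, 0; 0, 16, 0; 0, 0, 16] := by
    apply inv_eq_right_inv
    rw [h4]
    norm_num [Matrix.mul_fin_three]
    exact Matrix.one_fin_three.symm
  have hMT4 : (M * T) ^ 4 = !![1/16, 0, 0; 0, 1/16, 0; 0, 0, 1/16] := by
    rw [pow_succ, pow_succ, pow_succ, pow_one]
    simp [T, M, Matrix.mul_fin_three]
    norm_num
  constructor
  · rw [hMT4, hneg, hinv]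
    norm_num [Matrix.mul_fin_three]
    exact Matrix.one_fin_three.symm
  · rw [hneg, hinv]
    intro h
    have := congrFun (congrFun h 0) 0
    norm_num [Matrix.one_apply] at this
end

section
/- Let q ≠ 0 be complex with q^(2k) ≠ 1 for a positive integer k. Let T be the matrix with rows (q, q(q-1), 1-q), (0,0,1), (0,q²,0), A₁ with rows (1,0,0),(0,0,1),(0,1,0), and A₂ with rows (0,1,0),(1,0,0),(0,0,1). Then the (2,2) entry of (A₁A₂T)^(2k)·T^(-2k) equals q^(2k); in particular (A₁A₂T)^(2k)T^(-2k) ≠ I₃. -/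
open Matrix

theorem lk_alpha12T_even (q : ℂ) (hq : q ≠ 0) (k : ℕ) (hk : 0 < k) (hq2k : q ^ (2*k) ≠ 1) :
    let T : Matrix (Fin 3) (Fin 3) ℂ := !![q, q*(q-1), 1-q; 0, 0, 1; 0, q^2, 0]
    let A₁ : Matrix (Fin 3) (Fin 3) ℂ := !![1, 0, 0; 0, 0, 1; 0, 1, 0]
    let A₂ : Matrix (Fin 3) (Fin 3) ℂ := !![0, 1, 0; 1, 0, 0; 0, 0, 1]
    ((A₁ * A₂ * T) ^ (2*k) * T ^ (-(2*(k:ℤ)))) 1 1 = q ^ (2*k) ∧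
    (A₁ * A₂ * T) ^ (2*k) * T ^ (-(2*(k:ℤ))) ≠ 1 := by
  intro T A₁ A₂
  have hqk : (q : ℂ) ^ (2*k) ≠ 0 := pow_ne_zero _ hq
  -- T² = q² • 1
  have hT2 : T * T = (q^2) • (1 : Matrix (Fin 3) (Fin 3) ℂ) := by
    ext i j
    fin_cases i <;> fin_cases j <;>
      simp [T, Matrix.mul_apply, Fin.sum_univ_three, Matrix.one_apply, Matrix.vecHead,
        Matrix.vecTail, Function.comp] <;> ring
  have hT2k : T ^ (2*k) = (q ^ (2*k)) • (1 : Matrix (Fin 3) (Fin 3) ℂ) := by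
    have : T ^ (2*k) = (T * T) ^ k := by
      rw [← sq, ← pow_mul]
    rw [this, hT2, smul_pow, one_pow, ← pow_mul]
  -- the zpow as an inverse
  have hTz : T ^ (-(2*(k:ℤ))) = (q ^ (2*k))⁻¹ • (1 : Matrix (Fin 3) (Fin 3) ℂ) := by
    have h1 : (-(2*(k:ℤ))) = -((2*k : ℕ) : ℤ) := by push_cast; ring
    rw [h1, Matrix.zpow_neg_natCast, hT2k]
    apply Matrix.inv_eq_right_inv
    rw [Matrix.smul_mul, Matrix.mul_smul, one_mul, smul_smul, mul_inv_cancel₀ hqk, one_smul]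
  set M := A₁ * A₂ * T with hM
  -- row 1 of M^n
  have hMrow : ∀ l, M 1 l = q^2 * (1 : Matrix (Fin 3) (Fin 3) ℂ) 1 l := by
    intro l
    show (!![1, 0, 0; 0, 0, 1; 0, 1, 0] * !![0, 1, 0; 1, 0, 0; 0, 0, 1] *
      !![q, q*(q-1), 1-q; 0, 0, 1; 0, q^2, 0] : Matrix (Fin 3) (Fin 3) ℂ) 1 l = _
    fin_cases l <;>
      simp [Matrix.mul_apply, Fin.sum_univ_three, Matrix.one_apply, Matrix.vecHead,
        Matrix.vecTail]
  have hpow : ∀ n : ℕ, ∀ j, (M ^ n) 1 j = q ^ (2*n) * (1 : Matrix (Fin 3) (Fin 3) ℂ) 1 j := by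
    intro n
    induction n with
    | zero => intro j; simp
    | succ n ih =>
      intro j
      rw [pow_succ', Matrix.mul_apply, Fin.sum_univ_three]
      rw [hMrow 0, hMrow 1, hMrow 2, ih j]
      fin_cases j <;> simp [Matrix.one_apply] <;> ring
  have hentry : ((M ^ (2*k)) * T ^ (-(2*(k:ℤ)))) 1 1 = q ^ (2*k) := by
    rw [hTz, Matrix.mul_smul, Matrix.smul_apply, Matrix.mul_one, hpow (2*k) 1]
    simp only [Matrix.one_apply, if_pos rfl, mul_one]
    have h4 : q ^ (2*(2*k)) = q^(2*k) * q^(2*k) := by rw [two_mul (2*k), pow_add]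
    rw [h4]
    simp only [if_true, mul_one, smul_eq_mul]
    rw [← mul_assoc, inv_mul_cancel₀ hqk, one_mul]
  refine ⟨hentry, ?_⟩
  intro hcontra
  apply hq2k
  rw [← hentry, hcontra]
  simp [Matrix.one_apply]
end

section
/- Let q ≠ 0 be complex, T the matrix with rows (q, q(q-1), 1-q), (0,0,1), (0,q²,0), A₁ with rows (1,0,0),(0,0,1),(0,1,0), A₂ with rows (0,1,0),(1,0,0),(0,0,1). Then for every nonnegative integer k, the (2,2) entry of (A₁A₂T)^(2k+1)·T^(-(2k+1)) is 0; in particular (A₁A₂T)^(2k+1)T^(-(2k+1)) ≠ I₃. -/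
open Matrix

/-! Row `1` (indices from `0`) of both `A₁A₂T` and `T²` is `q²` times the unit row vector `e₁`,
while `e₁ T = e₂`. Writing `T^{-(2k+1)} = (T²)^{-(k+1)} T`, row `1` of
`(A₁A₂T)^{2k+1} T^{-(2k+1)}` is therefore a multiple of `e₂`, so its `(1,1)` entry vanishes. -/

section LeftEigenvector

variable {n R : Type*} [Fintype n] [DecidableEq n]

theorem vecMul_pow_eq_smul_of_vecMul_eq_smul [CommSemiring R] {v : n → R} {A : Matrix n n R}
    {c : R} (h : v ᵥ* A = c • v) (m : ℕ) : v ᵥ* A ^ m = c ^ m • v := by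
  induction m with
  | zero => simp
  | succ m ih => rw [pow_succ, ← vecMul_vecMul, ih, smul_vecMul, h, smul_smul, pow_succ]

theorem vecMul_inv_eq_smul_of_vecMul_eq_smul [Field R] {v : n → R} {A : Matrix n n R} {c : R}
    (hA : IsUnit A.det) (h : v ᵥ* A = c • v) : v ᵥ* A⁻¹ = c⁻¹ • v := by
  have hv : v = c • (v ᵥ* A⁻¹) := by
    rw [← smul_vecMul, ← h, vecMul_vecMul, mul_nonsing_inv A hA, vecMul_one]
  rcases eq_or_ne c 0 with rfl | hc
  · rw [zero_smul] at hv
    simp [hv]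
  · conv_rhs => rw [hv]
    rw [smul_smul, inv_mul_cancel₀ hc, one_smul]

theorem vecMul_zpow_eq_smul_of_vecMul_eq_smul [Field R] {v : n → R} {A : Matrix n n R} {c : R}
    (hA : IsUnit A.det) (h : v ᵥ* A = c • v) (m : ℤ) : v ᵥ* A ^ m = c ^ m • v := by
  obtain ⟨m, rfl | rfl⟩ := m.eq_nat_or_neg
  · simpa using vecMul_pow_eq_smul_of_vecMul_eq_smul h m
  · rw [zpow_neg_natCast, _root_.zpow_neg, zpow_natCast]
    exact vecMul_inv_eq_smul_of_vecMul_eq_smul (by simpa [det_pow] using hA.pow m)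
      (vecMul_pow_eq_smul_of_vecMul_eq_smul h m)

end LeftEigenvector

theorem lk_alpha12T_odd (q : ℂ) (hq : q ≠ 0) (k : ℕ) :
    let T : Matrix (Fin 3) (Fin 3) ℂ := !![q, q*(q-1), 1-q; 0, 0, 1; 0, q^2, 0]
    let A₁ : Matrix (Fin 3) (Fin 3) ℂ := !![1, 0, 0; 0, 0, 1; 0, 1, 0]
    let A₂ : Matrix (Fin 3) (Fin 3) ℂ := !![0, 1, 0; 1, 0, 0; 0, 0, 1]
    ((A₁ * A₂ * T) ^ (2*k+1) * T ^ (-(2*(k:ℤ)+1))) 1 1 = 0 ∧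
    (A₁ * A₂ * T) ^ (2*k+1) * T ^ (-(2*(k:ℤ)+1)) ≠ 1 := by
  intro T A₁ A₂
  set e : Fin 3 → ℂ := Pi.single 1 1
  have hT : e ᵥ* T = Pi.single 2 1 := by
    ext j; fin_cases j <;> simp [e, T, vecMul, dotProduct, Fin.sum_univ_three]
  have hT2 : e ᵥ* T ^ 2 = q ^ 2 • e := by
    ext j; fin_cases j <;> simp [e, T, sq, vecMul, dotProduct, Fin.sum_univ_three]
  have hM : e ᵥ* (A₁ * A₂ * T) = q ^ 2 • e := by
    ext j
    fin_cases j <;> simp [e, T, A₁, A₂, vecMul, dotProduct, Fin.sum_univ_three, mul_apply]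
  have hdet : IsUnit T.det := by
    have : T.det = -q ^ 3 := by simp [T, det_fin_three]; ring
    simpa [this] using hq
  have hdet2 : IsUnit (T ^ 2).det := by simpa [det_pow] using hdet.pow 2
  have hsplit : T ^ (-(2 * (k : ℤ) + 1)) = (T ^ 2) ^ (-((k : ℤ) + 1)) * T := by
    rw [show -(2 * (k : ℤ) + 1) = 2 * -((k : ℤ) + 1) + 1 by ring, Matrix.zpow_add hdet,
      Matrix.zpow_mul T hdet, zpow_one, zpow_ofNat]
  have hrow : e ᵥ* ((A₁ * A₂ * T) ^ (2 * k + 1) * T ^ (-(2 * (k : ℤ) + 1)))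
      = ((q ^ 2) ^ (2 * k + 1) * (q ^ 2) ^ (-((k : ℤ) + 1))) • Pi.single 2 1 := by
    rw [hsplit, ← vecMul_vecMul, ← vecMul_vecMul, vecMul_pow_eq_smul_of_vecMul_eq_smul hM,
      smul_vecMul, smul_vecMul, vecMul_zpow_eq_smul_of_vecMul_eq_smul hdet2 hT2, smul_vecMul, hT,
      smul_smul]
  have h11 : ((A₁ * A₂ * T) ^ (2*k+1) * T ^ (-(2*(k:ℤ)+1))) 1 1 = 0 := by
    simpa [e] using congrFun hrow 1
  refine ⟨h11, fun h => ?_⟩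
  rw [h] at h11
  simp at h11
end

section
/- Let q ≠ 0 be complex with q^(2k) ≠ 1 for a positive integer k. Let T be the matrix with rows (q, q(q-1), 1-q), (0,0,1), (0,q²,0), A₁ with rows (1,0,0),(0,0,1),(0,1,0), A₂ with rows (0,1,0),(1,0,0),(0,0,1). Then the (3,3) entry of (A₂A₁T)^(2k)·T^(-2k) equals q^(-2k); in particular (A₂A₁T)^(2k)T^(-2k) ≠ I₃. -/
open Matrix

theorem lk_alpha21T_even (q : ℂ) (hq : q ≠ 0) (k : ℕ) (hk : 0 < k) (hq2k : q ^ (2*k) ≠ 1) :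
    let T : Matrix (Fin 3) (Fin 3) ℂ := !![q, q*(q-1), 1-q; 0, 0, 1; 0, q^2, 0]
    let A₁ : Matrix (Fin 3) (Fin 3) ℂ := !![1, 0, 0; 0, 0, 1; 0, 1, 0]
    let A₂ : Matrix (Fin 3) (Fin 3) ℂ := !![0, 1, 0; 1, 0, 0; 0, 0, 1]
    ((A₂ * A₁ * T) ^ (2*k) * T ^ (-(2*(k:ℤ)))) 2 2 = q ^ (-(2*(k:ℤ))) ∧
    (A₂ * A₁ * T) ^ (2*k) * T ^ (-(2*(k:ℤ))) ≠ 1 := by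
  intro T A₁ A₂
  set M := A₂ * A₁ * T with hMdef
  have hc : q ^ (2*k) ≠ 0 := pow_ne_zero _ hq
  -- T^2 = q^2 • 1
  have hT2 : T ^ 2 = (q ^ 2) • (1 : Matrix (Fin 3) (Fin 3) ℂ) := by
    rw [pow_two]
    ext i j
    fin_cases i <;> fin_cases j <;>
      simp [T, Matrix.mul_apply, Fin.sum_univ_three, Matrix.one_apply, Matrix.vecHead, Matrix.vecTail, Function.comp] <;> ring
  have hT2k : T ^ (2*k) = (q ^ (2*k)) • (1 : Matrix (Fin 3) (Fin 3) ℂ) := by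
    rw [pow_mul, hT2, smul_pow, one_pow, ← pow_mul]
  -- inverse of T^(2k)
  have hTinv : T ^ (-(2*(k:ℤ))) = ((q ^ (2*k))⁻¹) • (1 : Matrix (Fin 3) (Fin 3) ℂ) := by
    have h1 : (-(2*(k:ℤ))) = (-(2*k : ℕ) : ℤ) := by push_cast; ring
    rw [h1, Matrix.zpow_neg_natCast, hT2k]
    refine Matrix.inv_eq_right_inv ?_
    rw [Matrix.smul_mul, Matrix.mul_smul, one_mul, smul_smul, mul_inv_cancel₀ hc, one_smul]
  -- last row of M^n
  have hrow : ∀ n : ℕ, ∀ j, (M ^ n) 2 j = (1 : Matrix (Fin 3) (Fin 3) ℂ) 2 j := by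
    intro n
    induction n with
    | zero => intro j; rw [pow_zero]
    | succ n ih =>
      intro j
      rw [pow_succ', Matrix.mul_apply, Fin.sum_univ_three]
      have h0 : M 2 0 = 0 := by
        simp [hMdef, T, A₁, A₂, Matrix.mul_apply, Fin.sum_univ_three]
      have h1 : M 2 1 = 0 := by
        simp [hMdef, T, A₁, A₂, Matrix.mul_apply, Fin.sum_univ_three]
      have h2 : M 2 2 = 1 := by
        simp [hMdef, T, A₁, A₂, Matrix.mul_apply, Fin.sum_univ_three]
      rw [h0, h1, h2, zero_mul, zero_mul, one_mul, zero_add, zero_add, ih]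
  have hentry : ((M ^ (2*k)) * T ^ (-(2*(k:ℤ)))) 2 2 = (q ^ (2*k))⁻¹ := by
    rw [hTinv, Matrix.mul_smul, Matrix.mul_one, Matrix.smul_apply, hrow]
    simp [Matrix.one_apply]
  have hq' : q ^ (-(2*(k:ℤ))) = (q ^ (2*k))⁻¹ := by
    rw [_root_.zpow_neg]
    norm_cast
  refine ⟨by rw [hentry, hq'], ?_⟩
  intro hcon
  have := congrArg (fun A : Matrix (Fin 3) (Fin 3) ℂ => A 2 2) hcon
  simp only [hentry] at this
  rw [Matrix.one_apply_eq] at this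
  exact hq2k (by rwa [inv_eq_one] at this)
end

section
/- Let q ≠ 0 be complex with q = 4, let T be the matrix with rows (4, 12, -3), (0,0,1), (0,16,0), and A₂ with rows (0,1,0),(1,0,0),(0,0,1). Then for every positive even integer k, the (3,3) entry of (A₂·T)^(2k)·T^(-2k) equals 1 - 4k²; in particular (A₂T)^(2k)T^(-2k) ≠ I₃ for k ≥ 1. -/
open Matrix

private noncomputable def lkT : Matrix (Fin 3) (Fin 3) ℂ := !![4, 12, -3; 0, 0, 1; 0, 16, 0]
private noncomputable def lkA : Matrix (Fin 3) (Fin 3) ℂ := !![0, 1, 0; 1, 0, 0; 0, 0, 1]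

private noncomputable def lkF (k : ℕ) : Matrix (Fin 3) (Fin 3) ℂ :=
  !![(2*(k:ℂ)-1)*((k:ℂ)-1), (k:ℂ)*(2*(k:ℂ)-1), -((k:ℂ)*((k:ℂ)-1));
     (k:ℂ)*(2*(k:ℂ)+1), ((k:ℂ)+1)*(2*(k:ℂ)+1), -((k:ℂ)*((k:ℂ)+1));
     4*(k:ℂ)*(2*(k:ℂ)-1), 4*(k:ℂ)*(2*(k:ℂ)+1), 1-4*(k:ℂ)^2]

private lemma lk_step (k : ℕ) : (lkA * lkT)^2 * lkF k = lkF (k+1) * lkT^2 := by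
  ext i j
  fin_cases i <;> fin_cases j <;>
    simp [lkA, lkT, lkF, pow_two, Matrix.mul_apply, Fin.sum_univ_three, Matrix.vecHead, Matrix.vecTail] <;>
    push_cast <;> ring

private lemma lk_key : ∀ k : ℕ, 1 ≤ k → (lkA * lkT) ^ (2*k) = lkF k * lkT ^ (2*k) := by
  intro k hk
  induction k, hk using Nat.le_induction with
  | base =>
    ext i j
    fin_cases i <;> fin_cases j <;>
      simp [lkA, lkT, lkF, pow_two, Matrix.mul_apply, Fin.sum_univ_three, Matrix.vecHead, Matrix.vecTail] <;> norm_num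
  | succ n hn ih =>
    have h1 : 2*(n+1) = 2 + 2*n := by ring
    rw [h1, pow_add, pow_add, ih, ← Matrix.mul_assoc, lk_step, Matrix.mul_assoc]

theorem lk_q4_entry (k : ℕ) (hk : 0 < k) (hke : Even k) :
    let T : Matrix (Fin 3) (Fin 3) ℂ := !![4, 12, -3; 0, 0, 1; 0, 16, 0]
    let A₂ : Matrix (Fin 3) (Fin 3) ℂ := !![0, 1, 0; 1, 0, 0; 0, 0, 1]
    ((A₂ * T) ^ (2*k) * T ^ (-(2*(k:ℤ)))) 2 2 = 1 - 4 * (k:ℂ)^2 ∧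
    (A₂ * T) ^ (2*k) * T ^ (-(2*(k:ℤ))) ≠ 1 := by
  intro T A₂
  have hT : T = lkT := rfl
  have hA : A₂ = lkA := rfl
  have hdet : IsUnit lkT.det := by
    simp [lkT, Matrix.det_fin_three, Matrix.vecHead, Matrix.vecTail]
  have hz : lkT ^ (-(2*(k:ℤ))) = (lkT ^ (2*k))⁻¹ := by
    have : -(2*(k:ℤ)) = -((2*k : ℕ) : ℤ) := by push_cast; ring
    rw [this, Matrix.zpow_neg hdet, zpow_natCast]
  have hdetp : IsUnit (lkT ^ (2*k)).det := by
    rw [Matrix.det_pow]; exact hdet.pow _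
  have hmain : (A₂ * T) ^ (2*k) * T ^ (-(2*(k:ℤ))) = lkF k := by
    rw [hT, hA, hz, lk_key k hk, Matrix.mul_assoc,
      Matrix.mul_nonsing_inv _ hdetp, Matrix.mul_one]
  rw [hmain]
  constructor
  · simp [lkF]
  · intro h
    have h22 : lkF k 2 2 = (1 : Matrix (Fin 3) (Fin 3) ℂ) 2 2 := by rw [h]
    simp [lkF, Matrix.one_apply] at h22
    exact hk.ne' h22
end

section
/- Let q ≠ 0 be complex, T the matrix with rows (q, q(q-1), 1-q), (0,0,1), (0,q²,0), A₂ with rows (0,1,0),(1,0,0),(0,0,1), and m a positive integer with q^(2m) ≠ 1. If (A₂T)^(2m) applied to the first standard basis vector e₁ equals e₁, then (A₂T)^(2m) = I₃; consequently (A₂T)^(2m)·T^(-2m) ≠ I₃ would follow if additionally (A₂T)^(2m)T^(-2m)e₁ = e₁. -/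
open Matrix

theorem lk_fix_e1 (q : ℂ) (hq : q ≠ 0) (m : ℕ) (hm : 0 < m) (hq2m : q ^ (2*m) ≠ 1) :
    let T : Matrix (Fin 3) (Fin 3) ℂ := !![q, q*(q-1), 1-q; 0, 0, 1; 0, q^2, 0]
    let A₂ : Matrix (Fin 3) (Fin 3) ℂ := !![0, 1, 0; 1, 0, 0; 0, 0, 1]
    let e₁ : Fin 3 → ℂ := ![1, 0, 0]
    (((A₂ * T) ^ (2*m)).mulVec e₁ = e₁ → (A₂ * T) ^ (2*m) = 1) ∧
    (((A₂ * T) ^ (2*m)).mulVec e₁ = e₁ →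
      ((A₂ * T) ^ (2*m) * T ^ (-(2*(m:ℤ)))).mulVec e₁ = e₁ →
      (A₂ * T) ^ (2*m) * T ^ (-(2*(m:ℤ))) ≠ 1) := by
  intro T A₂ e₁
  set M : Matrix (Fin 3) (Fin 3) ℂ := A₂ * T with hMdef
  set N : Matrix (Fin 3) (Fin 3) ℂ := M ^ (2*m) with hNdef
  have hcomm : N * M = M * N := by
    rw [hNdef, ← pow_succ, ← pow_succ']
  have hMe1 : M.mulVec e₁ = q • ![0,1,0] := by
    funext i
    fin_cases i <;>
      simp [hMdef, T, A₂, e₁, mulVec, dotProduct, Fin.sum_univ_three, Matrix.mul_apply]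
  have hMe2 : M.mulVec ![0,1,0] = (q*(q-1)) • ![0,1,0] + (q^2) • ![0,0,1] := by
    funext i
    fin_cases i <;>
      simp [hMdef, T, A₂, mulVec, dotProduct, Fin.sum_univ_three, Matrix.mul_apply]
  have main : N.mulVec e₁ = e₁ → N = 1 := by
    intro hfix
    have h2 : N.mulVec ![0,1,0] = ![0,1,0] := by
      have key : N.mulVec (q • ![0,1,0]) = q • ![0,1,0] := by
        calc N.mulVec (q • ![0,1,0]) = N.mulVec (M.mulVec e₁) := by rw [hMe1]
        _ = (N * M).mulVec e₁ := by rw [Matrix.mulVec_mulVec]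
        _ = (M * N).mulVec e₁ := by rw [hcomm]
        _ = M.mulVec (N.mulVec e₁) := by rw [Matrix.mulVec_mulVec]
        _ = q • ![0,1,0] := by rw [hfix, hMe1]
      rw [Matrix.mulVec_smul] at key
      exact smul_right_injective (Fin 3 → ℂ) hq key
    have h3 : N.mulVec ![0,0,1] = ![0,0,1] := by
      have key : N.mulVec ((q*(q-1)) • ![0,1,0] + (q^2) • ![0,0,1])
          = (q*(q-1)) • ![0,1,0] + (q^2) • ![0,0,1] := by
        calc N.mulVec ((q*(q-1)) • ![0,1,0] + (q^2) • ![0,0,1])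
            = N.mulVec (M.mulVec ![0,1,0]) := by rw [hMe2]
        _ = (N * M).mulVec ![0,1,0] := by rw [Matrix.mulVec_mulVec]
        _ = (M * N).mulVec ![0,1,0] := by rw [hcomm]
        _ = M.mulVec (N.mulVec ![0,1,0]) := by rw [Matrix.mulVec_mulVec]
        _ = (q*(q-1)) • ![0,1,0] + (q^2) • ![0,0,1] := by rw [h2, hMe2]
      rw [Matrix.mulVec_add, Matrix.mulVec_smul, Matrix.mulVec_smul, h2] at key
      have key2 : (q^2) • N.mulVec ![0,0,1] = (q^2) • ![0,0,1] := by
        have := add_left_cancel key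
        exact this
      exact smul_right_injective (Fin 3 → ℂ) (pow_ne_zero 2 hq) key2
    have c1 : ∀ i, N i 0 = ![1,0,0] i := by
      intro i
      have := congrFun hfix i
      simpa [mulVec, dotProduct, Fin.sum_univ_three, e₁] using this
    have c2 : ∀ i, N i 1 = ![0,1,0] i := by
      intro i
      have := congrFun h2 i
      simpa [mulVec, dotProduct, Fin.sum_univ_three] using this
    have c3 : ∀ i, N i 2 = ![0,0,1] i := by
      intro i
      have := congrFun h3 i
      simpa [mulVec, dotProduct, Fin.sum_univ_three] using this
    ext i j
    fin_cases i <;> fin_cases j <;>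
      simp_all [Matrix.one_apply]
  refine ⟨main, ?_⟩
  intro hfix hfix2 _
  have hN1 : N = 1 := main hfix
  rw [hN1, one_mul] at hfix2
  -- hfix2 : (T ^ (-(2*(m:ℤ)))).mulVec e₁ = e₁
  have hdet : IsUnit T.det := by
    have : T.det = -q^3 := by
      simp [T, Matrix.det_fin_three, Matrix.vecHead, Matrix.vecTail]
      ring
    rw [this]
    simpa using (pow_ne_zero 3 hq)
  have hzp : T ^ (-(2*(m:ℤ))) = (T ^ (2*m))⁻¹ := by
    have : (-(2*(m:ℤ))) = -((2*m : ℕ) : ℤ) := by push_cast; ring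
    rw [this, zpow_neg hdet, zpow_natCast]
  have hTe1 : ∀ n : ℕ, (T ^ n).mulVec e₁ = q ^ n • e₁ := by
    intro n
    induction n with
    | zero => simp
    | succ k ih =>
      have hT1 : T.mulVec e₁ = q • e₁ := by
        funext i
        fin_cases i <;> simp [T, e₁, mulVec, dotProduct, Fin.sum_univ_three]
      rw [pow_succ, ← Matrix.mulVec_mulVec, hT1, Matrix.mulVec_smul, ih, smul_smul,
        pow_succ, mul_comm]
  have hinv : T ^ (2*m) * (T ^ (2*m))⁻¹ = 1 := by
    apply Matrix.mul_nonsing_inv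
    simpa [Matrix.det_pow] using hdet.pow (2*m)
  have : e₁ = q ^ (2*m) • e₁ := by
    calc e₁ = (T ^ (2*m) * (T ^ (2*m))⁻¹).mulVec e₁ := by rw [hinv]; simp
    _ = (T ^ (2*m)).mulVec ((T ^ (2*m))⁻¹.mulVec e₁) := by rw [Matrix.mulVec_mulVec]
    _ = (T ^ (2*m)).mulVec e₁ := by rw [← hzp, hfix2]
    _ = q ^ (2*m) • e₁ := hTe1 (2*m)
  have h0 := congrFun this 0
  simp [e₁] at h0
  exact hq2m h0.symm
end
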